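/- arXiv:1312.0462 — 4 statements merged into one kernel-verified Lean document; each statement's English description precedes it below -/
import Mathlib

section
/- Let p, f_I^d, f_I^u be real univariate polynomials with f_I^d(x) < p(x) < f_I^u(x) and (f_I^d)'(x) < p'(x) < (f_I^u)'(x) for all x ≥ 0. Suppose 0 ≤ s < t with f_I^u(s) = 0, f_I^d(t) = 0, and (f_I^d)' has no real zero in (s,t). Then p has exactly one real root in (s,t). -/
/-!
Since `p < fu` at `s` and `p > fd` at `t`, we have `p(s) < 0 < p(t)`, so the intermediate value
theorem gives a root of `p` in `(s, t)`. By Darboux's theorem `fd'` has constant sign on `(s, t)`;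
it cannot be negative, as `fd(s) < p(s) < 0 = fd(t)`. Hence `p' > fd' > 0` on `(s, t)`, so `p` is
strictly increasing on `[s, t]` and the root is unique.
-/

open Set

theorem existsUnique_mem_Ioo_eq_of_strictMonoOn {α δ : Type*}
    [ConditionallyCompleteLinearOrder α] [TopologicalSpace α] [OrderTopology α] [DenselyOrdered α]
    [LinearOrder δ] [TopologicalSpace δ] [OrderClosedTopology δ]
    {f : α → δ} {a b : α} {c : δ} (hab : a ≤ b) (hf : ContinuousOn f (Icc a b))
    (hmono : StrictMonoOn f (Icc a b)) (ha : f a < c) (hb : c < f b) :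
    ∃! x, x ∈ Ioo a b ∧ f x = c := by
  obtain ⟨x, hx, hfx⟩ := intermediate_value_Ioo hab hf ⟨ha, hb⟩
  refine ⟨x, ⟨hx, hfx⟩, fun y ⟨hy, hfy⟩ ↦ ?_⟩
  exact hmono.injOn (Ioo_subset_Icc_self hy) (Ioo_subset_Icc_self hx) (hfy.trans hfx.symm)

theorem pos_of_hasDerivAt_of_ne_zero_of_lt {f f' : ℝ → ℝ} {s t : ℝ}
    (hf : ContinuousOn f (Icc s t)) (hf' : ∀ x ∈ Ioo s t, HasDerivAt f (f' x) x)
    (hne : ∀ x ∈ Ioo s t, f' x ≠ 0) (hlt : f s < f t) :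
    ∀ x ∈ Ioo s t, 0 < f' x := by
  have hderiv : ∀ x ∈ interior (Icc s t), HasDerivWithinAt f (f' x) (interior (Icc s t)) x := by
    rw [interior_Icc]
    exact fun x hx ↦ (hf' x hx).hasDerivWithinAt
  rcases hasDerivWithinAt_forall_lt_or_forall_gt_of_forall_ne (convex_Ioo s t)
    (fun x hx ↦ (hf' x hx).hasDerivWithinAt) hne with hneg | hpos
  · intro x hx
    have hst : s < t := hx.1.trans hx.2
    have hanti : StrictAntiOn f (Icc s t) :=
      strictAntiOn_of_hasDerivWithinAt_neg (convex_Icc s t) hf hderiv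
        (by rw [interior_Icc]; exact hneg)
    exact absurd (hanti (left_mem_Icc.2 hst.le) (right_mem_Icc.2 hst.le) hst) hlt.not_gt
  · exact hpos

/-- monotonicity criterion, case (*): if `fd < p < fu` and
`fd' < p' < fu'` on `[0,∞)`, `0 ≤ s < t`, `fu(s) = 0`, `fd(t) = 0` and `fd'`
has no zero in `(s,t)`, then `p` has exactly one real root in `(s,t)`. -/
theorem stmt2 (p fd fu : Polynomial ℝ)
    (hlt : ∀ x : ℝ, 0 ≤ x → fd.eval x < p.eval x ∧ p.eval x < fu.eval x)
    (hlt' : ∀ x : ℝ, 0 ≤ x →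
      fd.derivative.eval x < p.derivative.eval x ∧
      p.derivative.eval x < fu.derivative.eval x)
    (s t : ℝ) (hs : 0 ≤ s) (hst : s < t)
    (hus : fu.eval s = 0) (hdt : fd.eval t = 0)
    (hder : ∀ x ∈ Set.Ioo s t, fd.derivative.eval x ≠ 0) :
    ∃! x : ℝ, x ∈ Set.Ioo s t ∧ p.eval x = 0 := by
  have hps : p.eval s < 0 := hus ▸ (hlt s hs).2
  have hpt : 0 < p.eval t := hdt ▸ (hlt t (hs.trans hst.le)).1
  have hfd' : ∀ x ∈ Ioo s t, 0 < fd.derivative.eval x :=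
    pos_of_hasDerivAt_of_ne_zero_of_lt fd.continuousOn (fun x _ ↦ fd.hasDerivAt x) hder
      (by linarith [(hlt s hs).1])
  have hmono : StrictMonoOn (fun x ↦ p.eval x) (Icc s t) := by
    refine strictMonoOn_of_deriv_pos (convex_Icc s t) p.continuousOn fun x hx ↦ ?_
    rw [interior_Icc] at hx
    rw [Polynomial.deriv]
    exact (hfd' x hx).trans (hlt' x (hs.trans hx.1.le)).1
  exact existsUnique_mem_Ioo_eq_of_strictMonoOn hst.le p.continuousOn hmono hps hpt
end

section
/- Let p, f_I^d, f_I^u be real univariate polynomials with f_I^d(x) < p(x) < f_I^u(x) and (f_I^d)'(x) < p'(x) < (f_I^u)'(x) for all x ≥ 0. Suppose 0 ≤ s < t with f_I^d(s) = 0, f_I^u(t) = 0, and (f_I^u)' has no real zero in (s,t). Then p has exactly one real root in (s,t). -/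
/-!
Since `fu(s) > p(s) > fd(s) = 0 = fu(t)`, the upper bound `fu` does not increase from `s` to `t`;
by Darboux's theorem its derivative, having no zero in `(s,t)`, keeps one sign there, which must
therefore be negative. Then `p' < fu' < 0` on `(s,t)`, so `p` is strictly decreasing on `[s,t]`,
while `p(s) > fd(s) = 0` and `p(t) < fu(t) = 0`: by the intermediate value theorem `p` has exactly
one root in `(s,t)`.
-/

open Polynomial Set

lemma deriv_neg_of_forall_ne_zero_of_le {f : ℝ → ℝ} {s t : ℝ} (hst : s < t)
    (hcont : ContinuousOn f (Icc s t)) (hdiff : DifferentiableOn ℝ f (Ioo s t))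
    (hle : f t ≤ f s) (hne : ∀ x ∈ Ioo s t, deriv f x ≠ 0) :
    ∀ x ∈ Ioo s t, deriv f x < 0 := by
  have hderiv : ∀ x ∈ Ioo s t, HasDerivWithinAt f (deriv f x) (Ioo s t) x := fun x hx =>
    ((hdiff x hx).differentiableAt (isOpen_Ioo.mem_nhds hx)).hasDerivAt.hasDerivWithinAt
  refine (hasDerivWithinAt_forall_lt_or_forall_gt_of_forall_ne (convex_Ioo s t) hderiv
    hne).resolve_right fun hpos => ?_
  have hmono : StrictMonoOn f (Icc s t) :=
    strictMonoOn_of_deriv_pos (convex_Icc s t) hcont (by rwa [interior_Icc])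
  exact hle.not_gt (hmono (left_mem_Icc.2 hst.le) (right_mem_Icc.2 hst.le) hst)

lemma existsUnique_mem_Ioo_eq_zero_of_strictAntiOn {f : ℝ → ℝ} {s t : ℝ} (hst : s ≤ t)
    (hcont : ContinuousOn f (Icc s t)) (hanti : StrictAntiOn f (Icc s t))
    (hs : 0 < f s) (ht : f t < 0) :
    ∃! x : ℝ, x ∈ Ioo s t ∧ f x = 0 := by
  obtain ⟨c, hc, hc0⟩ := intermediate_value_Ioo' hst hcont ⟨ht, hs⟩
  refine ⟨c, ⟨hc, hc0⟩, fun y ⟨hy, hy0⟩ => ?_⟩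
  exact hanti.injOn (Ioo_subset_Icc_self hy) (Ioo_subset_Icc_self hc) (hy0.trans hc0.symm)

/-- monotonicity criterion, case (**): if `fd < p < fu` and
`fd' < p' < fu'` on `[0,∞)`, `0 ≤ s < t`, `fd(s) = 0`, `fu(t) = 0` and `fu'`
has no zero in `(s,t)`, then `p` has exactly one real root in `(s,t)`. -/
theorem stmt3 (p fd fu : Polynomial ℝ)
    (hlt : ∀ x : ℝ, 0 ≤ x → fd.eval x < p.eval x ∧ p.eval x < fu.eval x)
    (hlt' : ∀ x : ℝ, 0 ≤ x →
      fd.derivative.eval x < p.derivative.eval x ∧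
      p.derivative.eval x < fu.derivative.eval x)
    (s t : ℝ) (hs : 0 ≤ s) (hst : s < t)
    (hds : fd.eval s = 0) (hut : fu.eval t = 0)
    (hder : ∀ x ∈ Set.Ioo s t, fu.derivative.eval x ≠ 0) :
    ∃! x : ℝ, x ∈ Set.Ioo s t ∧ p.eval x = 0 := by
  have hps : 0 < p.eval s := hds ▸ (hlt s hs).1
  have hpt : p.eval t < 0 := hut ▸ (hlt t (hs.trans hst.le)).2
  have hfu_le : fu.eval t ≤ fu.eval s := by linarith [(hlt s hs).2]
  have hfu' : ∀ x ∈ Ioo s t, fu.derivative.eval x < 0 := by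
    simpa only [Polynomial.deriv] using deriv_neg_of_forall_ne_zero_of_le hst fu.continuousOn
      fu.differentiableOn hfu_le (by simpa only [Polynomial.deriv] using hder)
  have hanti : StrictAntiOn (fun x => p.eval x) (Icc s t) := by
    refine strictAntiOn_of_deriv_neg (convex_Icc s t) p.continuousOn fun x hx => ?_
    rw [interior_Icc] at hx
    rw [Polynomial.deriv]
    exact ((hlt' x (hs.trans hx.1.le)).2).trans (hfu' x hx)
  exact existsUnique_mem_Ioo_eq_zero_of_strictAntiOn hst.le p.continuousOn hanti hps hpt
end

section
/- Let f, g ∈ ℚ[x,y] be a zero-dimensional system such that the resultant R(x) = res_y(f,g) is squarefree (with content 1) and the leading coefficients of f and g with respect to y have no common factor. Then the system {f, g} is in generic position with respect to y: for every α ∈ ℂ with R(α) = 0, the polynomials f(α,y) and g(α,y) have exactly one common zero in ℂ. -/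
open Polynomial

/-- The Sylvester matrix of `f` and `g`, regarded as polynomials of degree
`m` and `n` respectively: the first `n` rows hold shifted coefficient vectors
of `f`, the last `m` rows shifted coefficient vectors of `g`. -/
def sylvesterMatrix {R : Type*} [CommRing R] (f g : Polynomial R) (m n : ℕ) :
    Matrix (Fin (n + m)) (Fin (n + m)) R :=
  Matrix.of fun i j =>
    if (i : ℕ) < n then
      (if (i : ℕ) ≤ (j : ℕ) ∧ (j : ℕ) ≤ (i : ℕ) + m then f.coeff (m + i - j) else 0)
    else
      (if (i : ℕ) - n ≤ (j : ℕ) ∧ (j : ℕ) ≤ ((i : ℕ) - n) + n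
        then g.coeff (n + ((i : ℕ) - n) - j) else 0)

/-- The resultant of `f` and `g` (w.r.t. their main variable), as the
determinant of the Sylvester matrix. -/
noncomputable def resultant {R : Type*} [CommRing R] (f g : Polynomial R) : R :=
  (sylvesterMatrix f g f.natDegree g.natDegree).det

/-- `f(α, y)`: specialize the inner variable `x` of `f ∈ R[x][y]` at `α`. -/
noncomputable def specializeX (α : ℂ) (f : Polynomial (Polynomial ℚ)) : Polynomial ℂ :=
  f.map (Polynomial.aeval α).toRingHom

/-!
Specializing `x ↦ α` commutes with forming the Sylvester matrix. As one of the two leading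
coefficients survives the specialization, the resultant of `f(α, y)` and `g(α, y)` vanishes,
so they have a common root. If they had two distinct common roots `y₀ ≠ y₁`, the power vectors
`(y₀ ^ a)ₐ` and `(y₁ ^ a)ₐ` would be independent vectors in the kernel of the transposed
specialized Sylvester matrix `Sᵀ(α)`. Every matrix obtained from `Sᵀ(α)` by replacing a single
column is then singular, so by the expansion of the derivative of a determinant as a sum over
columns, `α` would also be a root of `R'`. But a squarefree polynomial over `ℚ` is separable.
-/

open Matrix

theorem Matrix.derivative_det {R n : Type*} [CommRing R] [Fintype n] [DecidableEq n]
    (M : Matrix n n R[X]) :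
    derivative M.det = ∑ i, (M.updateCol i fun r => derivative (M r i)).det := by
  simp only [det_apply', map_sum, derivative_intCast_mul, derivative_prod_finset, Finset.mul_sum]
  rw [Finset.sum_comm]
  refine Finset.sum_congr rfl fun i _ => Finset.sum_congr rfl fun σ _ => ?_
  rw [← Finset.mul_prod_erase _ _ (Finset.mem_univ i), updateCol_self,
    Finset.prod_congr rfl fun j hj => updateCol_ne (Finset.ne_of_mem_erase hj)]
  ring

theorem Matrix.det_updateCol_eq_zero_of_mulVec_eq_zero {K n : Type*} [CommRing K] [IsDomain K]
    [Fintype n] [DecidableEq n] {M : Matrix n n K} {v : n → K} (hv : v ≠ 0) (hMv : M *ᵥ v = 0)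
    {i : n} (hvi : v i = 0) (c : n → K) : (M.updateCol i c).det = 0 := by
  refine exists_mulVec_eq_zero_iff.mp ⟨v, hv, ?_⟩
  rw [← hMv]
  ext r
  refine Finset.sum_congr rfl fun j _ => ?_
  rcases eq_or_ne j i with rfl | hj
  · simp [hvi]
  · simp [updateCol_ne hj]

theorem Matrix.det_updateCol_eq_zero_of_linearIndependent {K n : Type*} [CommRing K] [IsDomain K]
    [Fintype n] [DecidableEq n] {M : Matrix n n K} {v w : n → K}
    (hvw : LinearIndependent K ![v, w]) (hv : M *ᵥ v = 0) (hw : M *ᵥ w = 0) (i : n)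
    (c : n → K) : (M.updateCol i c).det = 0 := by
  have hli := LinearIndependent.pair_iff.mp hvw
  by_cases hvi : v i = 0
  · refine det_updateCol_eq_zero_of_mulVec_eq_zero (fun h => ?_) hv hvi c
    simpa using hli 1 0 (by simp [h])
  refine det_updateCol_eq_zero_of_mulVec_eq_zero (v := v i • w - w i • v) (fun h => ?_)
    (by simp [mulVec_sub, mulVec_smul, hv, hw]) (by simp [mul_comm]) c
  exact hvi (hli (-w i) (v i) (by rw [← h]; module)).2

theorem Polynomial.vecMul_sylvester_eq_zero {R : Type*} [CommRing R] {F G : R[X]} {m n : ℕ}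
    (hF : F.natDegree ≤ m) (hG : G.natDegree ≤ n) {y : R} (hFy : F.eval y = 0)
    (hGy : G.eval y = 0) : (fun a : Fin (m + n) => y ^ (a : ℕ)) ᵥ* sylvester F G m n = 0 := by
  rw [← toMatrix_sylvesterMap' F G hF hG]
  ext j
  simp only [vecMul, dotProduct, LinearMap.toMatrix_apply, degreeLT.basis_repr]
  set P := F.sylvesterMap G hF hG
    ((((degreeLT.basis R m).prod (degreeLT.basis R n)).reindex finSumFinEquiv) j)
  have hP : (P : R[X]).eval y = 0 := by simp [P, hFy, hGy]
  rw [eval_eq_sum_degreeLTEquiv P.2] at hP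
  simpa [mul_comm, degreeLTEquiv] using hP

theorem linearIndependent_pow_pair {K : Type*} [CommRing K] [IsDomain K] {N : ℕ} (hN : 2 ≤ N)
    {y₀ y₁ : K} (h : y₀ ≠ y₁) :
    LinearIndependent K ![fun a : Fin N => y₀ ^ (a : ℕ), fun a : Fin N => y₁ ^ (a : ℕ)] := by
  refine LinearIndependent.pair_iff.mpr fun s t hst => ?_
  have h0 := congrFun hst ⟨0, by omega⟩
  have h1 := congrFun hst ⟨1, by omega⟩
  simp only [Pi.add_apply, Pi.smul_apply, smul_eq_mul, pow_zero, pow_one, mul_one,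
    Pi.zero_apply] at h0 h1
  have hs : s * (y₀ - y₁) = 0 := by linear_combination h1 - y₁ * h0
  have hs : s = 0 := (mul_eq_zero.mp hs).resolve_right (sub_ne_zero.mpr h)
  exact ⟨hs, by simpa [hs] using h0⟩

theorem Polynomial.map_ne_zero_of_leadingCoeff_ne_zero {R S : Type*} [Semiring R] [Semiring S]
    (φ : R →+* S) {p : R[X]} (hp : φ p.leadingCoeff ≠ 0) : p.map φ ≠ 0 :=
  leadingCoeff_ne_zero.mp (by rwa [leadingCoeff_map_of_leadingCoeff_ne_zero φ hp])

theorem Polynomial.two_le_natDegree_of_eval_map_eq_zero {R K : Type*} [Semiring R] [Field K]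
    (φ : R →+* K) {p : R[X]} (hp : φ p.leadingCoeff ≠ 0) {y₀ y₁ : K} (h : y₀ ≠ y₁)
    (h₀ : (p.map φ).eval y₀ = 0) (h₁ : (p.map φ).eval y₁ = 0) : 2 ≤ p.natDegree := by
  classical
  rw [← natDegree_map_of_leadingCoeff_ne_zero φ hp, ← Finset.card_pair h]
  refine card_le_degree_of_subset_roots fun z hz => ?_
  simp only [Finset.insert_val, Finset.singleton_val, Multiset.mem_ndinsert,
    Multiset.mem_singleton] at hz
  rcases hz with rfl | rfl <;> simp [mem_roots (map_ne_zero_of_leadingCoeff_ne_zero φ hp), *]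

theorem Polynomial.aeval_derivative_resultant_eq_zero {A L : Type*} [CommRing A] [CommRing L]
    [IsDomain L] [Algebra A L] {α : L} {f g : A[X][X]} (hfg : 2 ≤ f.natDegree + g.natDegree)
    {y₀ y₁ : L} (hne : y₀ ≠ y₁)
    (h₀ : (f.map (aeval α).toRingHom).eval y₀ = 0 ∧ (g.map (aeval α).toRingHom).eval y₀ = 0)
    (h₁ : (f.map (aeval α).toRingHom).eval y₁ = 0 ∧ (g.map (aeval α).toRingHom).eval y₁ = 0) :
    aeval α (derivative (f.resultant g)) = 0 := by
  set φ : A[X] →+* L := (aeval α).toRingHom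
  have hM : (sylvester f g f.natDegree g.natDegree)ᵀ.map φ =
      (sylvester (f.map φ) (g.map φ) f.natDegree g.natDegree)ᵀ := by
    rw [sylvester_map_map, RingHom.mapMatrix_apply, transpose_map]
  have hker : ∀ y, (f.map φ).eval y = 0 ∧ (g.map φ).eval y = 0 →
      (sylvester f g f.natDegree g.natDegree)ᵀ.map φ *ᵥ (fun a => y ^ (a : ℕ)) = 0 := by
    rintro y ⟨hf, hg⟩
    rw [hM, mulVec_transpose]
    exact vecMul_sylvester_eq_zero natDegree_map_le natDegree_map_le hf hg
  rw [resultant, ← det_transpose, derivative_det, map_sum]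
  refine Finset.sum_eq_zero fun i _ => ?_
  change φ _ = 0
  rw [RingHom.map_det, RingHom.mapMatrix_apply, map_updateCol]
  exact det_updateCol_eq_zero_of_linearIndependent (linearIndependent_pow_pair hfg hne)
    (hker y₀ h₀) (hker y₁ h₁) i _

theorem Polynomial.exists_common_root_of_resultant_eq_zero {K : Type*} [Field K] [IsAlgClosed K]
    {F G : K[X]} {n : ℕ} (hF : F ≠ 0) (hG : G.natDegree ≤ n)
    (h : F.resultant G F.natDegree n = 0) : ∃ y, F.eval y = 0 ∧ G.eval y = 0 := by
  obtain ⟨k, rfl⟩ := Nat.exists_eq_add_of_le hG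
  rw [resultant_add_right_deg (k := k) (hg := le_rfl), coeff_natDegree] at h
  have hcop : ¬IsCoprime F G :=
    (resultant_eq_zero_iff.mp ((mul_eq_zero.mp h).resolve_left (pow_ne_zero _ (by simpa)))).2
  rw [isCoprime_iff_aeval_ne_zero_of_isAlgClosed K K F G] at hcop
  simpa using hcop

theorem Polynomial.exists_common_root_of_map_resultant_eq_zero {A L : Type*} [CommRing A]
    [Field L] [IsAlgClosed L] (φ : A →+* L) {f g : A[X]} (hres : φ (f.resultant g) = 0)
    (hlc : φ f.leadingCoeff ≠ 0 ∨ φ g.leadingCoeff ≠ 0) :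
    ∃ y, (f.map φ).eval y = 0 ∧ (g.map φ).eval y = 0 := by
  rw [← resultant_map_map] at hres
  rcases hlc with hf | hg
  · rw [← natDegree_map_of_leadingCoeff_ne_zero φ hf] at hres
    exact exists_common_root_of_resultant_eq_zero (map_ne_zero_of_leadingCoeff_ne_zero φ hf)
      natDegree_map_le hres
  · rw [resultant_comm, ← natDegree_map_of_leadingCoeff_ne_zero φ hg] at hres
    obtain ⟨y, hy⟩ := exists_common_root_of_resultant_eq_zero
      (map_ne_zero_of_leadingCoeff_ne_zero φ hg) natDegree_map_le
      ((mul_eq_zero.mp hres).resolve_left (by simp))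
    exact ⟨y, hy.symm⟩

theorem Polynomial.existsUnique_common_root_of_squarefree_resultant {K L : Type*} [Field K]
    [PerfectField K] [Field L] [IsAlgClosed L] [Algebra K L] {f g : K[X][X]}
    (hsf : Squarefree (f.resultant g)) (hlc : IsCoprime f.leadingCoeff g.leadingCoeff) {α : L}
    (hα : aeval α (f.resultant g) = 0) :
    ∃! y, (f.map (aeval α).toRingHom).eval y = 0 ∧ (g.map (aeval α).toRingHom).eval y = 0 := by
  set φ : K[X] →+* L := (aeval α).toRingHom
  have hlcφ : φ f.leadingCoeff ≠ 0 ∨ φ g.leadingCoeff ≠ 0 := by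
    by_contra! h
    simpa [h.1, h.2] using hlc.map φ
  obtain ⟨y₀, h₀⟩ := exists_common_root_of_map_resultant_eq_zero φ hα hlcφ
  refine ⟨y₀, h₀, fun y₁ h₁ => by_contra fun hne => ?_⟩
  have hdeg : 2 ≤ f.natDegree + g.natDegree := by
    rcases hlcφ with hf | hg
    · exact (two_le_natDegree_of_eval_map_eq_zero φ hf hne h₁.1 h₀.1).trans le_self_add
    · exact (two_le_natDegree_of_eval_map_eq_zero φ hg hne h₁.2 h₀.2).trans le_add_self
  exact (PerfectField.separable_iff_squarefree.mpr hsf).aeval_derivative_ne_zero hα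
    (aeval_derivative_resultant_eq_zero hdeg hne h₁ h₀)

theorem sylvesterMatrix_eq_submatrix_transpose {R : Type*} [CommRing R] (f g : R[X]) (m n : ℕ) :
    sylvesterMatrix f g m n =
      (sylvester f g m n)ᵀ.submatrix (fun i => (Fin.cast (add_comm n m) i).rev)
        (fun i => (Fin.cast (add_comm n m) i).rev) := by
  ext ⟨i, hi⟩ ⟨j, hj⟩
  simp only [sylvesterMatrix, sylvester, of_apply, submatrix_apply, transpose_apply]
  rcases lt_or_ge i n with h | h
  · have : (Fin.cast (add_comm n m) ⟨i, hi⟩).rev = Fin.natAdd m ⟨n - 1 - i, by omega⟩ := by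
      ext; simp; omega
    rw [this, Fin.addCases_right]
    simp only [Fin.val_rev, Fin.val_cast, Set.mem_Icc, if_pos h]
    congr 1
    · apply propext; omega
    · congr 1; omega
  · have : (Fin.cast (add_comm n m) ⟨i, hi⟩).rev = Fin.castAdd n ⟨n + m - 1 - i, by omega⟩ :=
      by ext; simp; omega
    rw [this, Fin.addCases_left]
    simp only [Fin.val_rev, Fin.val_cast, Set.mem_Icc, if_neg (not_lt.2 h)]
    congr 1
    · apply propext; omega
    · congr 1; omega

theorem resultant_eq_polynomial_resultant {R : Type*} [CommRing R] (f g : R[X]) :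
    _root_.resultant f g = f.resultant g := by
  rw [_root_.resultant, sylvesterMatrix_eq_submatrix_transpose, Polynomial.resultant]
  exact (det_submatrix_equiv_self ((finCongr (add_comm _ _)).trans Fin.revPerm) _).trans
    (det_transpose _)

theorem stmt7_general (f g : Polynomial (Polynomial ℚ))
    (hsf : Squarefree (_root_.resultant f g))
    (hlc : IsCoprime f.leadingCoeff g.leadingCoeff) :
    ∀ α : ℂ, aeval α (_root_.resultant f g) = 0 →
      ∃! y : ℂ, (specializeX α f).eval y = 0 ∧ (specializeX α g).eval y = 0 := by
  intro α hα
  rw [resultant_eq_polynomial_resultant] at hsf hα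
  exact existsUnique_common_root_of_squarefree_resultant hsf hlc hα

theorem stmt7 (f g : Polynomial (Polynomial ℚ))
    (hzero : {p : ℂ × ℂ |
      (specializeX p.1 f).eval p.2 = 0 ∧ (specializeX p.1 g).eval p.2 = 0}.Finite)
    (hcontent : (_root_.resultant f g).content = 1)
    (hsf : Squarefree (_root_.resultant f g))
    (hlc : IsCoprime f.leadingCoeff g.leadingCoeff) :
    ∀ α : ℂ, aeval α (_root_.resultant f g) = 0 →
      ∃! y : ℂ, (specializeX α f).eval y = 0 ∧ (specializeX α g).eval y = 0 :=
  stmt7_general f g hsf hlc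
end

section
/- Let f, g, h ∈ ℚ[x,y], let p = gcd(f,g), f* = f/p, g* = g/p, q = gcd(g*,h), g** = g*/q, h* = h/q. Then the common real zero set satisfies V_ℝ(f,g,h) = V_ℝ(f*,g**,h*) ∪ V_ℝ(f*,q) ∪ V_ℝ(p,h). -/
open MvPolynomial

theorem mul_eq_zero_and_mul_mul_eq_zero_and_mul_eq_zero_iff {M : Type*} [MulZeroClass M]
    [NoZeroDivisors M] (p f q g h : M) :
    (p * f = 0 ∧ p * (q * g) = 0 ∧ q * h = 0) ↔
      ((f = 0 ∧ g = 0 ∧ h = 0) ∨ (f = 0 ∧ q = 0)) ∨ (p = 0 ∧ q * h = 0) := by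
  simp only [mul_eq_zero]
  tauto

theorem stmt9_general (f g h p fstar gstar q gstarstar hstar : MvPolynomial (Fin 2) ℚ)
    (hpf : f = p * fstar) (hpg : g = p * gstar)
    (hqg : gstar = q * gstarstar) (hqh : h = q * hstar) :
    {v : Fin 2 → ℝ | aeval v f = 0 ∧ aeval v g = 0 ∧ aeval v h = 0} =
      {v : Fin 2 → ℝ | aeval v fstar = 0 ∧ aeval v gstarstar = 0 ∧ aeval v hstar = 0} ∪
        {v : Fin 2 → ℝ | aeval v fstar = 0 ∧ aeval v q = 0} ∪
          {v : Fin 2 → ℝ | aeval v p = 0 ∧ aeval v h = 0} := by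
  subst hpf hpg hqg hqh
  ext v
  simp only [Set.mem_ofPred_eq, Set.mem_union, map_mul]
  exact mul_eq_zero_and_mul_mul_eq_zero_and_mul_eq_zero_iff _ _ _ _ _

/-- let `p = gcd(f,g)`, `f = p·f*`, `g = p·g*`, `q = gcd(g*,h)`,
`g* = q·g**`, `h = q·h*` (gcd's expressed by their universal property in the
UFD `ℚ[x,y]`).  Then
`V_ℝ(f,g,h) = V_ℝ(f*,g**,h*) ∪ V_ℝ(f*,q) ∪ V_ℝ(p,h)`. -/
theorem stmt9 (f g h p fstar gstar q gstarstar hstar : MvPolynomial (Fin 2) ℚ)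
    (hpf : f = p * fstar) (hpg : g = p * gstar)
    (hpgcd : ∀ r : MvPolynomial (Fin 2) ℚ, r ∣ f → r ∣ g → r ∣ p)
    (hqg : gstar = q * gstarstar) (hqh : h = q * hstar)
    (hqgcd : ∀ r : MvPolynomial (Fin 2) ℚ, r ∣ gstar → r ∣ h → r ∣ q) :
    {v : Fin 2 → ℝ | aeval v f = 0 ∧ aeval v g = 0 ∧ aeval v h = 0} =
      {v : Fin 2 → ℝ | aeval v fstar = 0 ∧ aeval v gstarstar = 0 ∧ aeval v hstar = 0} ∪
        {v : Fin 2 → ℝ | aeval v fstar = 0 ∧ aeval v q = 0} ∪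
          {v : Fin 2 → ℝ | aeval v p = 0 ∧ aeval v h = 0} :=
  stmt9_general f g h p fstar gstar q gstarstar hstar hpf hpg hqg hqh
end
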